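/- Let C be a rank 4 tensor with Weyl symmetries on an n-dimensional inner product space, and let C_p be the induced linear operator on the space of p-forms (2 ≤ p ≤ n-2). Then the trace of C_p is zero. -/

import Mathlib

/-!
Expanding the antisymmetrizer, the trace of `C_p` is a signed sum over `σ ∈ S_p` of contractions
`∑ η_{ν_a} η_{ν_b} C_{ν_a ν_b ν_{α a} ν_{α b}}` over index vectors `ν` that are constant along the
cycles of a permutation `α` of the slots, except at the two slots `a, b` carrying the first pair of
indices of `C`. Following `α` from `α a` (or `α b`) one must come back to `a` or `b`, so the
contraction is `∑ G (ν_a) (ν_b)` with `G x y = η_x η_y C_{x y u v}`, `u, v ∈ {x, y}`. Relabelling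
index values preserves the admissible `ν`, so for fixed `ν_b = y` every `x ≠ y` is hit equally
often; antisymmetry gives `G y y = 0` and tracelessness `∑_x G x y = 0`, hence each contraction
vanishes.
-/

/-- The matrix (in the standard coordinate basis of rank-`p` arrays, `p = k+2`) of the
Weyl operator `C_p` on `p`-forms:
`(C_p F)_{ν_1…ν_p} = C^{ρσ}_{[ν_1ν_2} F_{ν_3…ν_p]ρσ}`. -/
noncomputable def weylMat {n : ℕ} (η : Fin n → ℝ) (C : Fin n → Fin n → Fin n → Fin n → ℝ)
    (k : ℕ) : Matrix (Fin (k + 2) → Fin n) (Fin (k + 2) → Fin n) ℝ :=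
  fun ν κ => (Nat.factorial (k + 2) : ℝ)⁻¹ *
    ∑ σ : Equiv.Perm (Fin (k + 2)), ((Equiv.Perm.sign σ : ℤ) : ℝ) *
      ∑ ρ : Fin n, ∑ τ : Fin n,
        η ρ * η τ * C ρ τ (ν (σ ⟨0, by omega⟩)) (ν (σ ⟨1, by omega⟩)) *
          (if κ = (fun j : Fin (k + 2) => if h : (j : ℕ) < k then ν (σ ⟨(j : ℕ) + 2, by omega⟩)
              else if (j : ℕ) = k then ρ else τ) then 1 else 0)

open Finset

theorem Equiv.Perm.exists_mem_forall_apply_eq {I X : Type*} [Finite I] (α : Equiv.Perm I)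
    {T : Set I} {j : I} (hj : j ∈ T) :
    ∃ t ∈ T, ∀ ν : I → X, (∀ i ∉ T, ν (α i) = ν i) → ν (α j) = ν t := by
  classical
  -- `t` is the first return of the forward `α`-orbit of `j` to `T`.
  have hex : ∃ m, (α ^ (m + 1)) j ∈ T :=
    ⟨orderOf α - 1, by rwa [Nat.sub_add_cancel (orderOf_pos α), pow_orderOf_eq_one]⟩
  refine ⟨_, Nat.find_spec hex, fun ν hν => ?_⟩
  have hconst : ∀ m ≤ Nat.find hex, ν ((α ^ (m + 1)) j) = ν (α j) := by
    intro m hm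
    induction m with
    | zero => simp
    | succ m ih =>
      rw [pow_succ', Equiv.Perm.mul_apply, hν _ (Nat.find_min hex (by omega)), ih (by omega)]
  exact (hconst _ le_rfl).symm

theorem Finset.card_filter_apply_perm {I X : Type*} [DecidableEq X] {S : Finset (I → X)}
    (hS : ∀ π : Equiv.Perm X, ∀ ν ∈ S, ⇑π ∘ ν ∈ S) (π : Equiv.Perm X) (a b : I) (x y : X) :
    #{ν ∈ S | ν a = π x ∧ ν b = π y} = #{ν ∈ S | ν a = x ∧ ν b = y} := by
  refine card_nbij' (⇑π.symm ∘ ·) (⇑π ∘ ·) ?_ ?_ ?_ ?_ <;> intro ν hν <;>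
    simp only [coe_filter, Set.mem_ofPred_eq] at hν ⊢
  · exact ⟨hS _ _ hν.1, by simp [hν.2]⟩
  · exact ⟨hS _ _ hν.1, by simp [hν.2]⟩
  · ext; simp
  · ext; simp

theorem Finset.sum_apply_apply_eq_zero_of_perm_invariant {I X M : Type*} [Fintype X]
    [DecidableEq X] [AddCommMonoid M] {S : Finset (I → X)}
    (hS : ∀ π : Equiv.Perm X, ∀ ν ∈ S, ⇑π ∘ ν ∈ S) (a b : I) {G : X → X → M}
    (hdiag : ∀ y, G y y = 0) (hsum : ∀ y, ∑ x, G x y = 0) :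
    ∑ ν ∈ S, G (ν a) (ν b) = 0 := by
  have hfib : ∑ ν ∈ S, G (ν a) (ν b) = ∑ y, ∑ x, #{ν ∈ S | ν a = x ∧ ν b = y} • G x y := by
    simp_rw [card_eq_sum_ones, sum_smul, one_smul, sum_filter]
    rw [sum_comm, sum_congr rfl fun y _ => sum_comm, sum_comm]
    simp [ite_and]
  rw [hfib]
  refine sum_eq_zero fun y _ => ?_
  by_cases hy : ∃ x₀, x₀ ≠ y
  · obtain ⟨x₀, hx₀⟩ := hy
    -- the swap of `x₀` and `x` fixes `y` and matches the fibres over `(x₀, y)` and `(x, y)`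
    have hterm : ∀ x, #{ν ∈ S | ν a = x ∧ ν b = y} • G x y
        = #{ν ∈ S | ν a = x₀ ∧ ν b = y} • G x y := by
      intro x
      rcases eq_or_ne x y with rfl | hx
      · simp [hdiag]
      · have h := card_filter_apply_perm hS (Equiv.swap x₀ x) a b x₀ y
        rw [Equiv.swap_apply_left, Equiv.swap_apply_of_ne_of_ne hx₀.symm hx.symm] at h
        rw [h]
    rw [sum_congr rfl fun x _ => hterm x, ← smul_sum, hsum, smul_zero]
  · push Not at hy
    exact sum_eq_zero fun x _ => by simp [hy x, hdiag]

theorem sum_weyl_contraction_eq_zero {I X R : Type*} [Fintype I] [DecidableEq I] [Fintype X]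
    [DecidableEq X] [CommRing R] [IsAddTorsionFree R] (η : X → R) (C : X → X → X → X → R)
    (hC1 : ∀ a b c d, C a b c d = - C b a c d)
    (hC2 : ∀ a b c d, C a b c d = - C a b d c)
    (hC5 : ∀ b d, ∑ a, η a * C a b a d = 0) (α : Equiv.Perm I) (a b : I)
    [DecidablePred fun ν : I → X => ∀ i, i ≠ a → i ≠ b → ν (α i) = ν i] :
    ∑ ν : I → X with ∀ i, i ≠ a → i ≠ b → ν (α i) = ν i,
      η (ν a) * η (ν b) * C (ν a) (ν b) (ν (α a)) (ν (α b)) = 0 := by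
  set S : Finset (I → X) := {ν | ∀ i, i ≠ a → i ≠ b → ν (α i) = ν i}
  have hS : ∀ π : Equiv.Perm X, ∀ ν ∈ S, ⇑π ∘ ν ∈ S := by
    intro π ν hν
    simp only [S, mem_filter, mem_univ, true_and, Function.comp_apply] at hν ⊢
    exact fun i hia hib => congrArg π (hν i hia hib)
  have hcycle : ∀ ν ∈ S, ∀ i ∉ ({a, b} : Set I), ν (α i) = ν i := by
    intro ν hν i hi
    simp only [Set.mem_insert_iff, Set.mem_singleton_iff, not_or] at hi
    exact (mem_filter.1 hν).2 i hi.1 hi.2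
  obtain ⟨s, hs, hνs⟩ := α.exists_mem_forall_apply_eq (X := X) (Set.mem_insert a {b})
  obtain ⟨t, ht, hνt⟩ :=
    α.exists_mem_forall_apply_eq (X := X) (Set.mem_insert_of_mem a (Set.mem_singleton b))
  rw [sum_congr rfl fun ν hν => by rw [hνs ν (hcycle ν hν), hνt ν (hcycle ν hν)]]
  have hC12 : ∀ x c d, C x x c d = 0 := fun x c d => self_eq_neg.mp (hC1 x x c d)
  have hC34 : ∀ x y c, C x y c c = 0 := fun x y c => self_eq_neg.mp (hC2 x y c c)
  have hRicci : ∀ y, ∑ x, η x * η y * C x y x y = 0 := fun y => by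
    simp_rw [mul_right_comm _ (η y), ← sum_mul, hC5, zero_mul]
  have hvanish : ∀ F : X → X → R, (∀ y, F y y = 0) → (∀ y, ∑ x, F x y = 0) →
      ∑ ν ∈ S, F (ν a) (ν b) = 0 :=
    fun F => sum_apply_apply_eq_zero_of_perm_invariant hS a b
  simp only [Set.mem_insert_iff, Set.mem_singleton_iff] at hs ht
  rcases hs with rfl | rfl <;> rcases ht with rfl | rfl
  · exact hvanish (fun x y => η x * η y * C x y x x) (by simp [hC12]) (by simp [hC34])
  · exact hvanish (fun x y => η x * η y * C x y x y) (by simp [hC12]) hRicci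
  · refine hvanish (fun x y => η x * η y * C x y y x) (by simp [hC12]) fun y => ?_
    simp_rw [hC2 _ y y, mul_neg, sum_neg_distrib, hRicci, neg_zero]
  · exact hvanish (fun x y => η x * η y * C x y y y) (by simp [hC12]) (by simp [hC34])

theorem Fin.val_add_two_eq_ite {k : ℕ} (j : Fin (k + 2)) :
    ((j + 2 : Fin (k + 2)) : ℕ) = if (j : ℕ) < k then (j : ℕ) + 2 else (j : ℕ) - k := by
  have h2 : ((2 : Fin (k + 2)) : ℕ) = if k = 0 then 0 else 2 := by
    rcases k with _ | k
    · rfl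
    · simp
  rw [Fin.val_add_eq_ite, h2]
  split_ifs <;> omega

section contractionPerm

variable {k : ℕ} (σ : Equiv.Perm (Fin (k + 2)))

/-- The diagonal condition `ν = (ν ∘ σ ∘ (· + 2), ρ, τ)` of `weylMat` ties slot `j < k` to slot
`contractionPerm σ j`; the last two slots carry the indices `ρ, τ` contracted with `C`. -/
def contractionPerm : Equiv.Perm (Fin (k + 2)) :=
  σ * Equiv.addRight 2

theorem contractionPerm_apply (j : Fin (k + 2)) :
    contractionPerm σ j = σ (j + 2) :=
  rfl

theorem contractionPerm_apply_of_lt {j : Fin (k + 2)} (hj : (j : ℕ) < k) :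
    contractionPerm σ j = σ ⟨j + 2, by omega⟩ := by
  rw [contractionPerm_apply]
  exact congrArg σ (Fin.ext (by rw [Fin.val_add_two_eq_ite, if_pos hj]))

theorem contractionPerm_apply_k :
    contractionPerm σ ⟨k, by omega⟩ = σ ⟨0, by omega⟩ := by
  rw [contractionPerm_apply]
  exact congrArg σ (Fin.ext (by simp [Fin.val_add_two_eq_ite]))

theorem contractionPerm_apply_k_add_one :
    contractionPerm σ ⟨k + 1, by omega⟩ = σ ⟨1, by omega⟩ := by
  rw [contractionPerm_apply]
  exact congrArg σ (Fin.ext (by simp [Fin.val_add_two_eq_ite]))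

theorem eq_weylMat_index_iff {n : ℕ} (ν : Fin (k + 2) → Fin n) (ρ τ : Fin n) :
    (ν = fun j : Fin (k + 2) => if h : (j : ℕ) < k then ν (σ ⟨(j : ℕ) + 2, by omega⟩)
        else if (j : ℕ) = k then ρ else τ) ↔
      (∀ i, i ≠ ⟨k, by omega⟩ → i ≠ ⟨k + 1, by omega⟩ → ν (contractionPerm σ i) = ν i) ∧
        ρ = ν ⟨k, by omega⟩ ∧ τ = ν ⟨k + 1, by omega⟩ := by
  simp only [funext_iff]
  constructor
  · intro h
    refine ⟨fun i hia hib => ?_, by simpa using (h ⟨k, by omega⟩).symm,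
      by simpa using (h ⟨k + 1, by omega⟩).symm⟩
    have hi : (i : ℕ) < k := by
      have := i.isLt
      have : (i : ℕ) ≠ k := Fin.val_ne_of_ne hia
      have : (i : ℕ) ≠ k + 1 := Fin.val_ne_of_ne hib
      omega
    rw [h i, dif_pos hi, contractionPerm_apply_of_lt σ hi]
  · rintro ⟨h, rfl, rfl⟩ j
    split_ifs with hj hjk
    · rw [← contractionPerm_apply_of_lt σ hj,
        h j (Fin.ne_of_val_ne hj.ne) (Fin.ne_of_val_ne (show (j : ℕ) ≠ k + 1 by omega))]
    · exact congrArg ν (Fin.ext hjk)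
    · exact congrArg ν (Fin.ext (show (j : ℕ) = k + 1 by omega))

end contractionPerm

theorem sum_weylMat_summand_eq_zero {n k : ℕ} (η : Fin n → ℝ)
    (C : Fin n → Fin n → Fin n → Fin n → ℝ)
    (hC1 : ∀ a b c d, C a b c d = - C b a c d)
    (hC2 : ∀ a b c d, C a b c d = - C a b d c)
    (hC5 : ∀ b d, ∑ a, η a * C a b a d = 0) (σ : Equiv.Perm (Fin (k + 2))) :
    ∑ ν : Fin (k + 2) → Fin n, ∑ ρ : Fin n, ∑ τ : Fin n,
        η ρ * η τ * C ρ τ (ν (σ ⟨0, by omega⟩)) (ν (σ ⟨1, by omega⟩)) *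
          (if ν = (fun j : Fin (k + 2) => if h : (j : ℕ) < k then ν (σ ⟨(j : ℕ) + 2, by omega⟩)
              else if (j : ℕ) = k then ρ else τ) then 1 else 0) = 0 := by
  calc _ = ∑ ν : Fin (k + 2) → Fin n with
          ∀ i, i ≠ ⟨k, by omega⟩ → i ≠ ⟨k + 1, by omega⟩ → ν (contractionPerm σ i) = ν i,
        η (ν ⟨k, by omega⟩) * η (ν ⟨k + 1, by omega⟩) * C (ν ⟨k, by omega⟩) (ν ⟨k + 1, by omega⟩)
          (ν (contractionPerm σ ⟨k, by omega⟩)) (ν (contractionPerm σ ⟨k + 1, by omega⟩)) := by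
        rw [sum_filter]
        refine sum_congr rfl fun ν _ => ?_
        simp_rw [eq_weylMat_index_iff, ite_and, mul_ite, mul_one, mul_zero]
        rw [← contractionPerm_apply_k, ← contractionPerm_apply_k_add_one]
        split_ifs <;> simp
    _ = 0 := sum_weyl_contraction_eq_zero η C hC1 hC2 hC5 _ _ _

theorem statement4_general (n k : ℕ) (η : Fin n → ℝ)
    (C : Fin n → Fin n → Fin n → Fin n → ℝ)
    (hC1 : ∀ a b c d, C a b c d = - C b a c d)
    (hC2 : ∀ a b c d, C a b c d = - C a b d c)
    (hC5 : ∀ b d, ∑ a, η a * C a b a d = 0) :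
    LinearMap.trace ℝ ((Fin (k + 2) → Fin n) → ℝ)
      (Matrix.mulVecLin (weylMat η C k)) = 0 := by
  rw [← Matrix.toLin'_apply', Matrix.trace_toLin'_eq, Matrix.trace]
  simp only [Matrix.diag_apply, weylMat, ← mul_sum]
  rw [sum_comm]
  simp only [← mul_sum, sum_weylMat_summand_eq_zero η C hC1 hC2 hC5, mul_zero, sum_const_zero]

/-- for a tensor `C` with the symmetries of a Weyl tensor on an
`n`-dimensional inner product space and `2 ≤ p ≤ n - 2` (`p = k + 2`), the trace of the
induced linear operator `C_p` on `p`-forms vanishes. -/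
theorem statement4 (n k : ℕ) (hp : k + 2 + 2 ≤ n)
    (η : Fin n → ℝ) (hη : ∀ i, η i = 1 ∨ η i = -1)
    (C : Fin n → Fin n → Fin n → Fin n → ℝ)
    (hC1 : ∀ a b c d, C a b c d = - C b a c d)
    (hC2 : ∀ a b c d, C a b c d = - C a b d c)
    (hC3 : ∀ a b c d, C a b c d = C c d a b)
    (hC4 : ∀ a b c d, C a b c d + C a c d b + C a d b c = 0)
    (hC5 : ∀ b d, ∑ a, η a * C a b a d = 0) :
    LinearMap.trace ℝ ((Fin (k + 2) → Fin n) → ℝ)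
      (Matrix.mulVecLin (weylMat η C k)) = 0 :=
  statement4_general n k η C hC1 hC2 hC5
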